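/- arXiv:math/0503640 — 4 statements merged into one kernel-verified Lean document; each statement's English description precedes it below -/
import Mathlib

section
/- Cartan's angular invariant satisfies the cocycle condition: for any four pairwise distinct null points x₁,x₂,x₃,x₄, -𝔸(x₂,x₃,x₄) + 𝔸(x₁,x₃,x₄) - 𝔸(x₁,x₂,x₄) + 𝔸(x₁,x₂,x₃) = 0 (mod 2π). -/
open Complex

/-- The Hermitian form `⟨u,w⟩ = u₁·conj(w₃) + u₂·conj(w₂) + u₃·conj(w₁)` on `ℂ³`. -/
noncomputable def herm (z w : Fin 3 → ℂ) : ℂ :=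
  z 0 * (starRingEnd ℂ) (w 2) + z 1 * (starRingEnd ℂ) (w 1) + z 2 * (starRingEnd ℂ) (w 0)

/-- Cartan's angular invariant of a triple of lifted boundary points. -/
noncomputable def cartan (p q r : Fin 3 → ℂ) : ℝ :=
  Complex.arg (-(herm p q * herm q r * herm r p))

/-
Writing `T(p,q,r) = ⟨p,q⟩⟨q,r⟩⟨r,p⟩`, the alternating product
`conj T(x₂,x₃,x₄) · T(x₁,x₃,x₄) · conj T(x₁,x₂,x₄) · T(x₁,x₂,x₃)` contains each pairing
`⟨xᵢ,xⱼ⟩` once and its conjugate once, since `⟨w,z⟩ = conj ⟨z,w⟩`. It is therefore the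
product of the `|⟨xᵢ,xⱼ⟩|²`, a nonnegative real, so its argument (the alternating sum of
Cartan invariants) vanishes mod `2π`.
-/

open ComplexConjugate ComplexOrder

theorem herm_swap (z w : Fin 3 → ℂ) : herm w z = conj (herm z w) := by
  simp only [herm, map_add, map_mul, conj_conj]
  ring

noncomputable def hermTriple (p q r : Fin 3 → ℂ) : ℂ :=
  herm p q * herm q r * herm r p

theorem cartan_eq_arg_neg_hermTriple (p q r : Fin 3 → ℂ) :
    cartan p q r = arg (-hermTriple p q r) :=
  rfl

theorem hermTriple_alternating_prod_eq_prod_normSq (p q r s : Fin 3 → ℂ) :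
    conj (hermTriple q r s) * hermTriple p r s * conj (hermTriple p q s) * hermTriple p q r =
      ((normSq (herm p q) * normSq (herm p r) * normSq (herm p s) *
        normSq (herm q r) * normSq (herm q s) * normSq (herm r s) : ℝ) : ℂ) := by
  simp only [hermTriple]
  rw [herm_swap q s, herm_swap p s, herm_swap p r]
  simp only [map_mul, conj_conj, ofReal_mul, ← mul_conj]
  ring

theorem hermTriple_alternating_prod_nonneg (p q r s : Fin 3 → ℂ) :
    0 ≤ conj (hermTriple q r s) * hermTriple p r s * conj (hermTriple p q s) * hermTriple p q r := by
  rw [hermTriple_alternating_prod_eq_prod_normSq]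
  exact zero_le_real.mpr (by apply_rules [mul_nonneg, normSq_nonneg])

theorem hermTriple_ne_zero {p q r : Fin 3 → ℂ} (hpq : herm p q ≠ 0) (hqr : herm q r ≠ 0)
    (hrp : herm r p ≠ 0) : hermTriple p q r ≠ 0 :=
  mul_ne_zero (mul_ne_zero hpq hqr) hrp

theorem Complex.coe_neg_arg_add_arg_sub_arg_add_arg_eq_zero {a b c d : ℂ}
    (ha : a ≠ 0) (hb : b ≠ 0) (hc : c ≠ 0) (hd : d ≠ 0) (h : 0 ≤ conj a * b * conj c * d) :
    ((-arg a + arg b - arg c + arg d : ℝ) : Real.Angle) = 0 := by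
  have ha' : conj a ≠ 0 := (map_ne_zero _).mpr ha
  have hc' : conj c ≠ 0 := (map_ne_zero _).mpr hc
  have harg : arg (conj a * b * conj c * d) = 0 :=
    arg_eq_zero_iff.mpr ⟨(nonneg_iff.mp h).1, (nonneg_iff.mp h).2.symm⟩
  calc ((-arg a + arg b - arg c + arg d : ℝ) : Real.Angle)
      = (arg (conj a * b * conj c * d) : Real.Angle) := by
        rw [arg_mul_coe_angle (mul_ne_zero (mul_ne_zero ha' hb) hc') hd,
          arg_mul_coe_angle (mul_ne_zero ha' hb) hc', arg_mul_coe_angle ha' hb,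
          arg_conj_coe_angle, arg_conj_coe_angle]
        simp only [Real.Angle.coe_add, Real.Angle.coe_sub, Real.Angle.coe_neg]
        abel
    _ = 0 := by rw [harg, Real.Angle.coe_zero]

theorem cartan_cocycle_general (x : Fin 4 → (Fin 3 → ℂ))
    (hdist : ∀ i j, i ≠ j → herm (x i) (x j) ≠ 0) :
    ((- cartan (x 1) (x 2) (x 3) + cartan (x 0) (x 2) (x 3)
      - cartan (x 0) (x 1) (x 3) + cartan (x 0) (x 1) (x 2) : ℝ) : Real.Angle) = 0 := by
  have hT : ∀ i j k, i ≠ j ∧ j ≠ k ∧ k ≠ i → -hermTriple (x i) (x j) (x k) ≠ 0 :=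
    fun i j k ⟨hij, hjk, hki⟩ =>
      neg_ne_zero.mpr (hermTriple_ne_zero (hdist i j hij) (hdist j k hjk) (hdist k i hki))
  simp only [cartan_eq_arg_neg_hermTriple]
  refine Complex.coe_neg_arg_add_arg_sub_arg_add_arg_eq_zero (hT 1 2 3 (by decide))
    (hT 0 2 3 (by decide)) (hT 0 1 3 (by decide)) (hT 0 1 2 (by decide)) ?_
  simpa only [map_neg, neg_mul, mul_neg, neg_neg] using
    hermTriple_alternating_prod_nonneg (x 0) (x 1) (x 2) (x 3)

/-- The cocycle condition for Cartan's angular invariant: for four pairwise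
distinct null points `x₁, x₂, x₃, x₄` (lifted to null vectors with pairwise
nonvanishing Hermitian products),
`-𝔸(x₂,x₃,x₄) + 𝔸(x₁,x₃,x₄) - 𝔸(x₁,x₂,x₄) + 𝔸(x₁,x₂,x₃) = 0 (mod 2π)`. -/
theorem cartan_cocycle (x : Fin 4 → (Fin 3 → ℂ))
    (hnull : ∀ i, herm (x i) (x i) = 0)
    (hne : ∀ i, x i ≠ 0)
    (hdist : ∀ i j, i ≠ j → herm (x i) (x j) ≠ 0) :
    ((- cartan (x 1) (x 2) (x 3) + cartan (x 0) (x 2) (x 3)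
      - cartan (x 0) (x 1) (x 3) + cartan (x 0) (x 1) (x 2) : ℝ) : Real.Angle) = 0 :=
  cartan_cocycle_general x hdist
end

section
/- For the configuration p₁ = ∞, p₂ = 0, q₁ = (1,t), q₂ = (z,s|z|²), tan 𝔸(p₁,q₁,q₂) = (|z|²·s - t + 2·Im z)/|z-1|². -/
/-! Both pairings with the lift of `∞` equal `1`, so `𝔸(∞, p, q) = arg (-⟨p̂, q̂⟩)`. For
`p = (z, t)` and `q = (w, u)` one computes `-⟨p̂, q̂⟩ = (‖z - w‖² + i (u - t + 2 Im (w z̄))) / 2`,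
and `tan ∘ arg` is the ratio of imaginary to real part. -/

open Complex

/-- The lift of a Heisenberg point `(z,t)` to `ℂ³`. -/
noncomputable def heisLift (z : ℂ) (t : ℝ) : Fin 3 → ℂ :=
  ![(-(‖z‖ : ℂ) ^ 2 + t * Complex.I) / 2, z, 1]

/-- The lift of the point `∞`. -/
noncomputable def inftyLift : Fin 3 → ℂ := ![1, 0, 0]

open ComplexConjugate

@[simp]
theorem herm_inftyLift_heisLift (z : ℂ) (t : ℝ) : herm inftyLift (heisLift z t) = 1 := by
  simp [herm, inftyLift, heisLift]

@[simp]
theorem herm_heisLift_inftyLift (z : ℂ) (t : ℝ) : herm (heisLift z t) inftyLift = 1 := by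
  simp [herm, inftyLift, heisLift]

theorem cartan_inftyLift_heisLift (z w : ℂ) (t u : ℝ) :
    cartan inftyLift (heisLift z t) (heisLift w u) = arg (-herm (heisLift z t) (heisLift w u)) := by
  simp [cartan]

theorem neg_herm_heisLift_re (z w : ℂ) (t u : ℝ) :
    (-herm (heisLift z t) (heisLift w u)).re = ‖z - w‖ ^ 2 / 2 := by
  simp [herm, heisLift, map_div₀, map_ofNat, ← Complex.ofReal_pow, Complex.sq_norm,
    Complex.normSq_apply]
  ring

theorem neg_herm_heisLift_im (z w : ℂ) (t u : ℝ) :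
    (-herm (heisLift z t) (heisLift w u)).im = (u - t + 2 * (w * conj z).im) / 2 := by
  simp [herm, heisLift, map_div₀, map_ofNat, ← Complex.ofReal_pow]
  ring

theorem tan_cartan_inftyLift_heisLift (z w : ℂ) (t u : ℝ) :
    Real.tan (cartan inftyLift (heisLift z t) (heisLift w u)) =
      (u - t + 2 * (w * conj z).im) / ‖z - w‖ ^ 2 := by
  rw [cartan_inftyLift_heisLift, Complex.tan_arg, neg_herm_heisLift_re, neg_herm_heisLift_im,
    div_div_div_cancel_right₀ two_ne_zero]

theorem tan_cartan_formula_general (z : ℂ) (t s : ℝ) :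
    Real.tan (cartan inftyLift (heisLift 1 t) (heisLift z (s * (‖z‖) ^ 2))) =
      ((‖z‖) ^ 2 * s - t + 2 * z.im) / (‖z - 1‖) ^ 2 := by
  rw [tan_cartan_inftyLift_heisLift, map_one, mul_one, norm_sub_rev, mul_comm s]

/-- For `p₁ = ∞`, `q₁ = (1,t)`, `q₂ = (z,s|z|²)`,
`tan 𝔸(p₁,q₁,q₂) = (|z|²·s - t + 2·Im z)/|z-1|²`. -/
theorem tan_cartan_formula (z : ℂ) (t s : ℝ) (hz : z ≠ 1) :
    Real.tan (cartan inftyLift (heisLift 1 t) (heisLift z (s * (‖z‖) ^ 2))) =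
      ((‖z‖) ^ 2 * s - t + 2 * z.im) / (‖z - 1‖) ^ 2 :=
  tan_cartan_formula_general z t s
end

section
/- If three of the four triples among four pairwise distinct points on the boundary of complex hyperbolic space have vanishing Cartan invariant (so each such triple lies on an ℝ-circle), then all four points lie on a common ℝ-circle. -/
open Complex Matrix

/-- The matrix `J` of the Hermitian form. -/
noncomputable def formJ : Matrix (Fin 3) (Fin 3) ℂ := !![0, 0, 1; 0, 1, 0; 1, 0, 0]

/-- A family of boundary points (given by nonzero null lifts in `ℂ³`) lies on a
common `ℝ`-circle if some element of `U(2,1)` moves all of them onto the standard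
`ℝ`-circle, whose lifts are, up to a complex scalar, real null vectors. -/
def OnCommonRCircle {ι : Type*} (v : ι → (Fin 3 → ℂ)) : Prop :=
  ∃ g : Matrix (Fin 3) (Fin 3) ℂ, g.conjTranspose * formJ * g = formJ ∧
    ∀ i, ∃ (c : ℂ) (r : Fin 3 → ℝ), c ≠ 0 ∧ g.mulVec (v i) = c • (fun k => (r k : ℂ))

/-! Rescale the lifts of `v₀, v₁, v₂` to `vᵢ' = ⟨v₃, vᵢ⟩ vᵢ`. Then `⟨vᵢ', v₃⟩ = |⟨vᵢ, v₃⟩|²`, and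
`⟨vᵢ', vⱼ'⟩` is the triple product `⟨vᵢ, vⱼ⟩⟨vⱼ, v₃⟩⟨v₃, vᵢ⟩`, a nonpositive real number when the
Cartan invariant of `(vᵢ, vⱼ, v₃)` vanishes. So every rescaled lift has real products with
`p = v₁'`, `q = v₂'` and `r = v₃`. The real span of the null vectors `p, q, r` contains a frame
`e₀, e₁, e₂` in which the form has matrix `J`; the matrix `Q` with these columns lies in `U(2,1)`,
and since the coordinates of `Q⁻¹ x` are the products of `x` with the `eᵢ`, `Q⁻¹` sends every
rescaled lift to a real vector. -/

open ComplexConjugate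

lemma herm_conj_symm (z w : Fin 3 → ℂ) : conj (herm w z) = herm z w := by
  simp only [herm, map_add, map_mul, conj_conj]; ring

@[simp]
lemma herm_sub_left (z z' w : Fin 3 → ℂ) : herm (z - z') w = herm z w - herm z' w := by
  simp only [herm, Pi.sub_apply]; ring

@[simp]
lemma herm_sub_right (z w w' : Fin 3 → ℂ) : herm z (w - w') = herm z w - herm z w' := by
  simp only [herm, Pi.sub_apply, map_sub]; ring

@[simp]
lemma herm_smul_left (c : ℂ) (z w : Fin 3 → ℂ) : herm (c • z) w = c * herm z w := by
  simp only [herm, Pi.smul_apply, smul_eq_mul]; ring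

@[simp]
lemma herm_smul_right (c : ℂ) (z w : Fin 3 → ℂ) : herm z (c • w) = conj c * herm z w := by
  simp only [herm, Pi.smul_apply, smul_eq_mul, map_mul]; ring

@[simp]
lemma herm_real_smul_left (t : ℝ) (z w : Fin 3 → ℂ) : herm (t • z) w = t * herm z w := by
  rw [← herm_smul_left, Complex.coe_smul]

@[simp]
lemma herm_real_smul_right (t : ℝ) (z w : Fin 3 → ℂ) : herm z (t • w) = t * herm z w := by
  rw [← Complex.coe_smul, herm_smul_right, conj_ofReal]

lemma herm_smul_smul (x y z : Fin 3 → ℂ) :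
    herm (herm z x • x) (herm z y • y) = herm x y * herm y z * herm z x := by
  rw [herm_smul_left, herm_smul_right, herm_conj_symm]; ring

lemma herm_smul_self_left (x z : Fin 3 → ℂ) : herm (herm z x • x) z = normSq (herm x z) := by
  rw [herm_smul_left, normSq_eq_conj_mul_self, herm_conj_symm]

lemma herm_smul_self_right (x z : Fin 3 → ℂ) : herm z (herm z x • x) = normSq (herm z x) := by
  rw [herm_smul_right, normSq_eq_conj_mul_self]

lemma cartan_eq_zero_iff {p q r : Fin 3 → ℂ} :
    cartan p q r = 0 ↔
      (herm p q * herm q r * herm r p).re ≤ 0 ∧ (herm p q * herm q r * herm r p).im = 0 := by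
  rw [cartan, arg_eq_zero_iff, neg_re, neg_im, neg_nonneg, neg_eq_zero]

lemma im_herm_smul_smul_of_cartan_eq_zero {x y z : Fin 3 → ℂ} (h : cartan x y z = 0) :
    (herm (herm z x • x) (herm z y • y)).im = 0 := by
  rw [herm_smul_smul]; exact (cartan_eq_zero_iff.mp h).2

lemma re_herm_smul_smul_neg_of_cartan_eq_zero {x y z : Fin 3 → ℂ} (h : cartan x y z = 0)
    (hxy : herm x y ≠ 0) (hyz : herm y z ≠ 0) (hzx : herm z x ≠ 0) :
    (herm (herm z x • x) (herm z y • y)).re < 0 := by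
  rw [herm_smul_smul]
  refine (cartan_eq_zero_iff.mp h).1.lt_of_ne fun h0 => ?_
  exact mul_ne_zero (mul_ne_zero hxy hyz) hzx (Complex.ext h0 (cartan_eq_zero_iff.mp h).2)

lemma formJ_mul_formJ : formJ * formJ = 1 := by
  ext i j; fin_cases i <;> fin_cases j <;> simp [formJ, mul_apply, Fin.sum_univ_three]

lemma conjTranspose_mul_formJ_mul_apply (Q : Matrix (Fin 3) (Fin 3) ℂ) (i j : Fin 3) :
    (Qᴴ * formJ * Q) i j = herm (Qᵀ j) (Qᵀ i) := by
  simp [herm, formJ, mul_apply, Fin.sum_univ_three]; ring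

lemma formJ_mul_conjTranspose_mul_formJ_mulVec (Q : Matrix (Fin 3) (Fin 3) ℂ) (x : Fin 3 → ℂ) :
    (formJ * Qᴴ * formJ) *ᵥ x = fun k => herm x (Qᵀ k.rev) := by
  funext k
  fin_cases k <;>
    simp only [mulVec, dotProduct, mul_apply, Fin.sum_univ_three] <;> simp [herm, formJ] <;> ring

section PseudoUnitary

variable {Q : Matrix (Fin 3) (Fin 3) ℂ}

lemma formJ_mul_conjTranspose_mul_formJ_mul_self (hQ : Qᴴ * formJ * Q = formJ) :
    formJ * Qᴴ * formJ * Q = 1 := by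
  rw [mul_assoc formJ, mul_assoc formJ, hQ, formJ_mul_formJ]

lemma inv_eq_formJ_mul_conjTranspose_mul_formJ (hQ : Qᴴ * formJ * Q = formJ) :
    Q⁻¹ = formJ * Qᴴ * formJ :=
  inv_eq_left_inv (formJ_mul_conjTranspose_mul_formJ_mul_self hQ)

lemma conjTranspose_inv_mul_formJ_mul_inv (hQ : Qᴴ * formJ * Q = formJ) :
    (Q⁻¹)ᴴ * formJ * Q⁻¹ = formJ := by
  have hright : Q * Q⁻¹ = 1 :=
    mul_nonsing_inv Q (isUnit_det_of_left_inverse (formJ_mul_conjTranspose_mul_formJ_mul_self hQ))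
  calc (Q⁻¹)ᴴ * formJ * Q⁻¹ = (Q⁻¹)ᴴ * (Qᴴ * formJ * Q) * Q⁻¹ := by rw [hQ]
    _ = (Q * Q⁻¹)ᴴ * formJ * (Q * Q⁻¹) := by simp only [conjTranspose_mul, mul_assoc]
    _ = formJ := by rw [hright, conjTranspose_one, one_mul, mul_one]

lemma inv_mulVec (hQ : Qᴴ * formJ * Q = formJ) (x : Fin 3 → ℂ) :
    Q⁻¹ *ᵥ x = fun k => herm x (Qᵀ k.rev) := by
  rw [inv_eq_formJ_mul_conjTranspose_mul_formJ hQ, formJ_mul_conjTranspose_mul_formJ_mulVec]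

end PseudoUnitary

section NullTriple

variable {p q r : Fin 3 → ℂ} {a b c : ℝ}

lemma exists_frame_of_null_triple (hp : herm p p = 0) (hq : herm q q = 0) (hr : herm r r = 0)
    (hpq : herm p q = a) (hqr : herm q r = b) (hrp : herm r p = c) (habc : a * b * c < 0) :
    ∃ Q : Matrix (Fin 3) (Fin 3) ℂ, Qᴴ * formJ * Q = formJ ∧
      ∀ x, (herm x p).im = 0 → (herm x q).im = 0 → (herm x r).im = 0 →
        ∀ j, (herm x (Qᵀ j)).im = 0 := by
  have ha : (a : ℂ) ≠ 0 := ofReal_ne_zero.mpr (by rintro rfl; simp at habc)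
  have hqp : herm q p = a := by rw [← herm_conj_symm, hpq, conj_ofReal]
  have hrq : herm r q = b := by rw [← herm_conj_symm, hqr, conj_ofReal]
  have hpr : herm p r = c := by rw [← herm_conj_symm, hrp, conj_ofReal]
  set s := (√(-(2 * a * b * c)))⁻¹
  have hs : (s : ℂ) ^ 2 * (-(2 * a * b * c)) = 1 := by
    have habc' : (-(2 * a * b * c) : ℂ) ≠ 0 := by
      exact_mod_cast (by linarith : -(2 * a * b * c) ≠ 0)
    rw [← ofReal_pow, inv_pow, Real.sq_sqrt (by linarith)]; push_cast
    exact inv_mul_cancel₀ habc'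
  -- `w = a • r - b • p - c • q` has `⟨w, p⟩ = ⟨w, q⟩ = 0` and `⟨w, w⟩ = -2abc > 0`.
  let e : Fin 3 → Fin 3 → ℂ := ![p, s • (a • r - b • p - c • q), a⁻¹ • q]
  refine ⟨(of e)ᵀ, ?_, ?_⟩
  · ext i j
    rw [conjTranspose_mul_formJ_mul_apply, transpose_transpose]
    change herm (e j) (e i) = _
    fin_cases i <;> fin_cases j <;>
      simp [e, formJ, hp, hq, hr, hpq, hqr, hrp, hqp, hrq, hpr, ha]
    all_goals first | exact Or.inr (by ring) | linear_combination hs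
  · intro x hxp hxq hxr j
    change (herm x (e j)).im = 0
    fin_cases j <;> simp [e, hxp, hxq, hxr]

theorem onCommonRCircle_of_null_triple {ι : Type*} {v : ι → Fin 3 → ℂ} (hp : herm p p = 0)
    (hq : herm q q = 0) (hr : herm r r = 0) (hpq : herm p q = a) (hqr : herm q r = b)
    (hrp : herm r p = c) (habc : a * b * c < 0)
    (hv : ∀ i, ∃ d : ℂ, d ≠ 0 ∧ (herm (d • v i) p).im = 0 ∧ (herm (d • v i) q).im = 0 ∧
      (herm (d • v i) r).im = 0) :
    OnCommonRCircle v := by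
  obtain ⟨Q, hQ, hreal⟩ := exists_frame_of_null_triple hp hq hr hpq hqr hrp habc
  refine ⟨Q⁻¹, conjTranspose_inv_mul_formJ_mul_inv hQ, fun i => ?_⟩
  obtain ⟨d, hd, hxp, hxq, hxr⟩ := hv i
  refine ⟨d⁻¹, fun k => (herm (d • v i) (Qᵀ k.rev)).re, inv_ne_zero hd, ?_⟩
  calc Q⁻¹ *ᵥ v i = d⁻¹ • Q⁻¹ *ᵥ (d • v i) := by rw [mulVec_smul, inv_smul_smul₀ hd]
    _ = _ := by
        rw [inv_mulVec hQ]
        congr 1; funext k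
        exact Complex.ext rfl (by rw [hreal _ hxp hxq hxr, ofReal_im])

end NullTriple

theorem four_points_on_RCircle_general (v : Fin 4 → (Fin 3 → ℂ))
    (hnull : ∀ i, herm (v i) (v i) = 0)
    (hdist : ∀ i j, i ≠ j → herm (v i) (v j) ≠ 0)
    (h1 : cartan (v 1) (v 2) (v 3) = 0)
    (h2 : cartan (v 0) (v 2) (v 3) = 0)
    (h3 : cartan (v 0) (v 1) (v 3) = 0) :
    OnCommonRCircle v := by
  set p := herm (v 3) (v 1) • v 1
  set q := herm (v 3) (v 2) • v 2
  have hpq : herm p q = (herm p q).re :=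
    Complex.ext rfl (by rw [ofReal_im, im_herm_smul_smul_of_cartan_eq_zero h1])
  have ha : (herm p q).re < 0 := re_herm_smul_smul_neg_of_cartan_eq_zero h1
    (hdist 1 2 (by decide)) (hdist 2 3 (by decide)) (hdist 3 1 (by decide))
  have hp : herm p p = 0 := by simp [p, hnull]
  have hq : herm q q = 0 := by simp [q, hnull]
  refine onCommonRCircle_of_null_triple hp hq (hnull 3) hpq (herm_smul_self_left _ _)
    (herm_smul_self_right _ _) (mul_neg_of_neg_of_pos (mul_neg_of_neg_of_pos ha
      (normSq_pos.2 (hdist 2 3 (by decide)))) (normSq_pos.2 (hdist 3 1 (by decide)))) fun i => ?_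
  match i with
  | 0 => exact ⟨_, hdist 3 0 (by decide), im_herm_smul_smul_of_cartan_eq_zero h3,
      im_herm_smul_smul_of_cartan_eq_zero h2, by rw [herm_smul_self_left, ofReal_im]⟩
  | 1 => exact ⟨_, hdist 3 1 (by decide), by rw [hp, zero_im],
      im_herm_smul_smul_of_cartan_eq_zero h1, by rw [herm_smul_self_left, ofReal_im]⟩
  | 2 => exact ⟨_, hdist 3 2 (by decide),
      by rw [← herm_conj_symm, conj_im, hpq, ofReal_im, neg_zero], by rw [hq, zero_im],
      by rw [herm_smul_self_left, ofReal_im]⟩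
  | 3 => exact ⟨1, one_ne_zero, by rw [one_smul, herm_smul_self_right, ofReal_im],
      by rw [one_smul, herm_smul_self_right, ofReal_im], by rw [one_smul, hnull, zero_im]⟩

/-- If three of the four triples among four pairwise distinct boundary points have
vanishing Cartan invariant, then all four points lie on a common `ℝ`-circle. -/
theorem four_points_on_RCircle (v : Fin 4 → (Fin 3 → ℂ))
    (hnull : ∀ i, herm (v i) (v i) = 0)
    (hne : ∀ i, v i ≠ 0)
    (hdist : ∀ i j, i ≠ j → herm (v i) (v j) ≠ 0)
    (h1 : cartan (v 1) (v 2) (v 3) = 0)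
    (h2 : cartan (v 0) (v 2) (v 3) = 0)
    (h3 : cartan (v 0) (v 1) (v 3) = 0) :
    OnCommonRCircle v :=
  four_points_on_RCircle_general v hnull hdist h1 h2 h3
end

section
/- For the special tetrahedron with vertices p₁ = (0, 2+√3), p₂ = (0, -(2+√3)), q₁ = (ω, 0), q₂ = (1, 0) in the Heisenberg group, where ω = e^{-iπ/3}, Cartan's invariants satisfy 𝔸(q₁,q₂,p₂) = π/3 and 𝔸(p₁,q₂,p₂) = -π/3. -/
/-!
With `⟨·,·⟩` evaluated on lifts, `⟨q₂,p⟩⟨p,q₁⟩ = (1 + t²)/4 > 0` for every vertical point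
`p = (0,t)`, while `⟨q₁,q₂⟩ = ω - 1`; so the first negated triple product is a positive multiple
of `1 - ω = e^{iπ/3}`, whatever the height of `p`. For `p₁ = (0,a)`, `p₂ = (0,-a)` the negated
triple product is `(a/4)(2a + (1 - a²)i)`, and `a = 2 + √3` is the positive root of
`a² - 2√3 a - 1 = 0`, which turns `2a + (1 - a²)i` into `4a ω`.
-/

open Complex

open ComplexConjugate Real

lemma herm_heisLift (z w : ℂ) (s t : ℝ) :
    herm (heisLift z s) (heisLift w t) =
      z * conj w - ((‖z‖ ^ 2 + ‖w‖ ^ 2 : ℝ) : ℂ) / 2 + ((s - t) / 2 : ℝ) * I := by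
  simp only [herm, heisLift, Matrix.cons_val_zero, Matrix.cons_val_one, Matrix.cons_val_two,
    Matrix.head_cons, Matrix.tail_cons, map_one, map_div₀, map_add, map_neg, map_mul, map_pow,
    conj_ofReal, conj_I, map_ofNat]
  push_cast
  ring

lemma exp_neg_pi_div_three_mul_I : exp (-(π / 3 : ℝ) * I) = 1 / 2 - (√3 / 2 : ℝ) * I := by
  rw [← ofReal_neg, exp_mul_I, ← ofReal_cos, ← ofReal_sin, Real.cos_neg, Real.sin_neg,
    cos_pi_div_three, sin_pi_div_three]
  push_cast
  ring

lemma arg_half_add_sqrt_three_div_two_mul_I : arg (1 / 2 + (√3 / 2 : ℝ) * I) = π / 3 := by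
  rw [← arg_cos_add_sin_mul_I (θ := π / 3) ⟨by linarith [pi_pos], by linarith [pi_pos]⟩,
    ← ofReal_cos, ← ofReal_sin, cos_pi_div_three, sin_pi_div_three]
  norm_num

lemma arg_half_sub_sqrt_three_div_two_mul_I : arg (1 / 2 - (√3 / 2 : ℝ) * I) = -(π / 3) := by
  rw [← arg_cos_add_sin_mul_I (θ := -(π / 3)) ⟨by linarith [pi_pos], by linarith [pi_pos]⟩,
    ← ofReal_cos, ← ofReal_sin, Real.cos_neg, Real.sin_neg, cos_pi_div_three, sin_pi_div_three]
  push_cast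
  ring_nf

lemma cartan_heisLift_omega_one_vertical (t : ℝ) :
    cartan (heisLift (exp (-(π / 3 : ℝ) * I)) 0) (heisLift 1 0) (heisLift 0 t) = π / 3 := by
  have hω : ‖exp (-(π / 3 : ℝ) * I)‖ = 1 := by
    rw [← ofReal_neg]
    exact norm_exp_ofReal_mul_I _
  have triple : -(herm (heisLift (exp (-(π / 3 : ℝ) * I)) 0) (heisLift 1 0) *
      herm (heisLift 1 0) (heisLift 0 t) * herm (heisLift 0 t) (heisLift (exp (-(π / 3 : ℝ) * I)) 0))
      = ((1 + t ^ 2) / 4 : ℝ) * (1 / 2 + (√3 / 2 : ℝ) * I) := by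
    simp only [herm_heisLift, hω, norm_one, norm_zero, map_one, map_zero, mul_zero, zero_mul]
    rw [exp_neg_pi_div_three_mul_I]
    push_cast
    linear_combination (-(1 / 2 + √3 / 2 * I) * t ^ 2 / 4) * I_sq
  rw [cartan, triple, arg_real_mul _ (by positivity), arg_half_add_sqrt_three_div_two_mul_I]

lemma cartan_heisLift_vertical_one_vertical {a : ℝ} (ha : 0 < a) :
    cartan (heisLift 0 a) (heisLift 1 0) (heisLift 0 (-a)) = arg (2 * a + (1 - a ^ 2) * I) := by
  have triple : -(herm (heisLift 0 a) (heisLift 1 0) * herm (heisLift 1 0) (heisLift 0 (-a)) *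
      herm (heisLift 0 (-a)) (heisLift 0 a)) = (a / 4 : ℝ) * (2 * a + (1 - a ^ 2) * I) := by
    simp only [herm_heisLift, norm_one, norm_zero, map_one, map_zero, mul_zero, zero_mul]
    push_cast
    linear_combination (-a ^ 2 / 2 + a ^ 3 / 4 * I) * I_sq
  rw [cartan, triple, arg_real_mul _ (by positivity)]

/-- For the special tetrahedron with vertices `p₁ = (0, 2+√3)`, `p₂ = (0, -(2+√3))`,
`q₁ = (ω, 0)`, `q₂ = (1, 0)` where `ω = e^{-iπ/3}`, one has
`𝔸(q₁,q₂,p₂) = π/3` and `𝔸(p₁,q₂,p₂) = -π/3`. -/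
theorem cartan_standard_special_tetrahedron :
    cartan (heisLift (Complex.exp (-(Real.pi / 3 : ℝ) * Complex.I)) 0) (heisLift 1 0)
        (heisLift 0 (-(2 + Real.sqrt 3))) = Real.pi / 3 ∧
    cartan (heisLift 0 (2 + Real.sqrt 3)) (heisLift 1 0)
        (heisLift 0 (-(2 + Real.sqrt 3))) = -(Real.pi / 3) := by
  refine ⟨cartan_heisLift_omega_one_vertical _, ?_⟩
  have ha : (0 : ℝ) < 2 + √3 := by positivity
  have hroot : (2 + √3) ^ 2 - 1 = 2 * √3 * (2 + √3) := by
    linear_combination -sq_sqrt (show (0 : ℝ) ≤ 3 by norm_num)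
  have hdir : 2 * ((2 + √3 : ℝ) : ℂ) + (1 - ((2 + √3 : ℝ) : ℂ) ^ 2) * I =
      (4 * (2 + √3) : ℝ) * (1 / 2 - (√3 / 2 : ℝ) * I) := by
    have hroot' := congrArg ((↑) : ℝ → ℂ) hroot
    push_cast at hroot' ⊢
    linear_combination (-I) * hroot'
  rw [cartan_heisLift_vertical_one_vertical ha, hdir, arg_real_mul _ (by positivity),
    arg_half_sub_sqrt_three_div_two_mul_I]
end
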